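/- arXiv:1911.00574 — 3 statements merged into one kernel-verified Lean document; each statement's English description precedes it below -/
import Mathlib

section
/- Let μ and ν be Borel probability measures on ℝⁿ and let Γ ⊂ ℝⁿ × ℝⁿ be a closed set such that for every Borel set O ⊂ ℝⁿ one has μ(O) ≤ ν({y ∈ ℝⁿ : ∃ x ∈ O, (x,y) ∈ Γ}) and ν(O) ≤ μ({x ∈ ℝⁿ : ∃ y ∈ O, (x,y) ∈ Γ}). Then there exists a Borel probability measure π on ℝⁿ × ℝⁿ with first marginal μ and second marginal ν which is concentrated on Γ, i.e. π((ℝⁿ × ℝⁿ) ∖ Γ) = 0. -/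
/-
Strassen's theorem by discretization. At scale `ε`, a compact set carrying most of the mass of `μ`
is cut into finitely many measurable cells of diameter `< ε`, its complement being one more cell;
likewise for `ν`. The hypothesis on `μ` and `ν` becomes Hall's condition for the cell masses, cell
`i` being related to cell `j` when `Γ` meets their product. A weighted Hall theorem (the marriage
theorem applied to rescaled integer masses, followed by a compactness argument) yields a transport
plan between the cells, and spreading each of its weights as the product of the conditional
measures on the two cells gives an exact coupling of `μ` and `ν` that puts mass `≤ ε` outside the
`ε`-neighbourhood of `Γ`. Couplings of two fixed probability measures form a tight family, so by
Prokhorov's theorem these couplings have a weak limit as `ε → 0`, and the portmanteau theorem shows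
that this limit is concentrated on the closed set `Γ`.
-/

open MeasureTheory Set Metric Filter
open scoped RealInnerProductSpace ENNReal

noncomputable section

abbrev E (n : ℕ) := EuclideanSpace ℝ (Fin n)

/-- The subdifferential of `ψ` at `x`:
`∂ψ(x) = {z : ψ(y) ≥ ψ(x) + z·(y−x) for all y}`. -/
def subdiff {n : ℕ} (ψ : E n → ℝ) (x : E n) : Set (E n) :=
  {z | ∀ y : E n, ψ x + ⟪z, y - x⟫ ≤ ψ y}

/-- `∂ψ(A) = ⋃_{x ∈ A} ∂ψ(x)`. -/
def subdiffSet {n : ℕ} (ψ : E n → ℝ) (A : Set (E n)) : Set (E n) :=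
  ⋃ x ∈ A, subdiff ψ x

open ProbabilityTheory
open scoped Topology

section Hall

variable {I J : Type*} [Fintype I] [Fintype J]

-- Quantifying over all `T` containing the `R`-neighbourhood of `S` avoids deciding `R`.
def HallCondition {M : Type*} [AddCommMonoid M] [LE M] (a : I → M) (b : J → M)
    (R : I → J → Prop) : Prop :=
  ∀ (S : Finset I) (T : Finset J), (∀ i ∈ S, ∀ j, R i j → j ∈ T) → ∑ i ∈ S, a i ≤ ∑ j ∈ T, b j

open Finset in
theorem sum_card_filter_sigma_mk {ι : Type*} [Fintype ι] {κ : ι → Type*} [∀ i, Fintype (κ i)]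
    (P : (Σ i, κ i) → Prop) [DecidablePred P] : ∑ i, #{m : κ i | P ⟨i, m⟩} = #{u | P u} := by
  simpa only [card_filter] using (Fintype.sum_sigma fun u => if P u then 1 else 0).symm

open Finset in
theorem exists_nat_transportPlan {a : I → ℕ} {b : J → ℕ} {R : I → J → Prop}
    (hall : HallCondition a b R) :
    ∃ w : I → J → ℕ, (∀ i j, w i j ≠ 0 → R i j) ∧ (∀ i, ∑ j, w i j = a i) ∧
      ∀ j, ∑ i, w i j ≤ b j := by
  classical
  -- split supply `i` into `a i` units and demand `j` into `b j` slots, then match units to slots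
  let t : (Σ i, Fin (a i)) → Finset (Σ j, Fin (b j)) := fun u => {v | R u.1 v.1}
  have hcard (s : Finset (Σ i, Fin (a i))) : #s ≤ #(s.biUnion t) := by
    let T : Finset J := {j | ∃ u ∈ s, R u.1 j}
    have hsub : s ⊆ (s.image Sigma.fst).sigma fun _ => univ := fun u hu => by
      simpa using ⟨u.2, hu⟩
    have hT : s.biUnion t = T.sigma fun _ => univ := by ext v; simp [t, T]
    calc #s ≤ ∑ i ∈ s.image Sigma.fst, a i := by simpa using Finset.card_le_card hsub
      _ ≤ ∑ j ∈ T, b j := hall _ _ fun i hi j hij => by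
          obtain ⟨u, hu, rfl⟩ := mem_image.1 hi
          exact mem_filter.2 ⟨mem_univ _, u, hu, hij⟩
      _ = #(s.biUnion t) := by simp [hT]
  obtain ⟨f, hf_inj, hf_mem⟩ := (all_card_le_biUnion_card_iff_exists_injective t).1 hcard
  have hfR (u : Σ i, Fin (a i)) : R u.1 (f u).1 := by simpa [t] using hf_mem u
  refine ⟨fun i j => #{m : Fin (a i) | (f ⟨i, m⟩).1 = j}, fun i j hw => ?_, fun i => ?_,
    fun j => ?_⟩
  · obtain ⟨m, hm⟩ := card_ne_zero.1 hw
    exact (mem_filter.1 hm).2 ▸ hfR ⟨i, m⟩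
  · simpa using (card_eq_sum_card_fiberwise (f := fun m => (f ⟨i, m⟩).1)
      (s := univ) (t := univ) (fun _ _ => mem_coe.2 (mem_univ _))).symm
  · calc ∑ i, #{m : Fin (a i) | (f ⟨i, m⟩).1 = j}
        = #{u | (f u).1 = j} := sum_card_filter_sigma_mk fun u => (f u).1 = j
      _ ≤ #{v : Σ j, Fin (b j) | v.1 = j} :=
        card_le_card_of_injOn f (fun u hu => by simpa using hu) hf_inj.injOn
      _ = b j := by
        simp [← sum_card_filter_sigma_mk fun v : Σ j, Fin (b j) => v.1 = j, apply_ite]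

-- The upper bound `∑ j, w i j ≤ a i` keeps these sets inside a compact box.
def approxTransportPlans (a : I → ℝ) (b : J → ℝ) (R : I → J → Prop) (δ : ℝ) :
    Set (I → J → ℝ) :=
  {w | (∀ i j, 0 ≤ w i j) ∧ (∀ i j, ¬R i j → w i j = 0) ∧
    (∀ i, a i - δ ≤ ∑ j, w i j ∧ ∑ j, w i j ≤ a i) ∧ ∀ j, ∑ i, w i j ≤ b j + δ}

variable {a : I → ℝ} {b : J → ℝ} {R : I → J → Prop}

theorem isClosed_approxTransportPlans (δ : ℝ) : IsClosed (approxTransportPlans a b R δ) := by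
  simp only [approxTransportPlans, ofPred_and, ofPred_forall]
  repeat' first
    | refine .inter ?_ ?_ | refine isClosed_iInter fun _ => ?_
    | refine isClosed_le ?_ ?_ | refine isClosed_eq ?_ ?_
  all_goals fun_prop

theorem approxTransportPlans_subset_Icc (δ : ℝ) :
    approxTransportPlans a b R δ ⊆ Icc 0 fun i _ => a i := fun _ ⟨hw0, _, hrow, _⟩ =>
  ⟨fun i j => hw0 i j, fun i j =>
    (Finset.single_le_sum (fun j _ => hw0 i j) (Finset.mem_univ j)).trans (hrow i).2⟩

theorem approxTransportPlans_mono {δ δ' : ℝ} (h : δ ≤ δ') :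
    approxTransportPlans a b R δ ⊆ approxTransportPlans a b R δ' :=
  fun _ ⟨hw0, hwR, hrow, hcol⟩ => ⟨hw0, hwR, fun i => ⟨by linarith [(hrow i).1], (hrow i).2⟩,
    fun j => by linarith [hcol j]⟩

theorem approxTransportPlans_nonempty (ha : ∀ i, 0 ≤ a i) (hall : HallCondition a b R) (m : ℕ) :
    (approxTransportPlans a b R (1 / (m + 1))).Nonempty := by
  have hb (j : J) : 0 ≤ b j := by simpa using hall ∅ {j} (by simp)
  set c : ℝ := m + 1
  have hc : 0 < c := by positivity
  clear_value c
  -- an integer plan between the rescaled supplies `⌊c a⌋` and demands `⌈c b⌉`, scaled back by `c`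
  obtain ⟨W, hWR, hWrow, hWcol⟩ := exists_nat_transportPlan (a := fun i => ⌊c * a i⌋₊)
    (b := fun j => ⌈c * b j⌉₊) (R := R) fun S T hST => by
      have key : ∑ i ∈ S, (⌊c * a i⌋₊ : ℝ) ≤ ∑ j ∈ T, (⌈c * b j⌉₊ : ℝ) := calc
        ∑ i ∈ S, (⌊c * a i⌋₊ : ℝ) ≤ ∑ i ∈ S, c * a i :=
          Finset.sum_le_sum fun i _ => Nat.floor_le (by have := ha i; positivity)
        _ ≤ ∑ j ∈ T, c * b j := by
          simpa only [← Finset.mul_sum] using mul_le_mul_of_nonneg_left (hall S T hST) hc.le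
        _ ≤ ∑ j ∈ T, (⌈c * b j⌉₊ : ℝ) := Finset.sum_le_sum fun j _ => Nat.le_ceil _
      exact_mod_cast key
  refine ⟨fun i j => W i j / c, fun i j => by positivity,
    fun i j hR => by simp [of_not_not (mt (hWR i j) hR)], fun i => ?_, fun j => ?_⟩
  · have hrow : ∑ j, (W i j : ℝ) / c = ⌊c * a i⌋₊ / c := by
      rw [← Finset.sum_div]; exact_mod_cast congrArg (fun n : ℕ => (n : ℝ) / c) (hWrow i)
    rw [hrow, le_div_iff₀ hc, div_le_iff₀ hc, sub_mul, one_div, inv_mul_cancel₀ hc.ne', mul_comm]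
    exact ⟨by linarith [Nat.lt_floor_add_one (c * a i)],
      Nat.floor_le (by have := ha i; positivity)⟩
  · have hcol : ∑ i, (W i j : ℝ) / c ≤ ⌈c * b j⌉₊ / c := by
      rw [← Finset.sum_div]; gcongr; exact_mod_cast hWcol j
    refine hcol.trans ?_
    rw [div_le_iff₀ hc, add_mul, one_div, inv_mul_cancel₀ hc.ne', mul_comm]
    exact (Nat.ceil_lt_add_one (by have := hb j; positivity)).le

theorem exists_transportPlan (ha : ∀ i, 0 ≤ a i) (hall : HallCondition a b R) :
    ∃ w : I → J → ℝ, (∀ i j, 0 ≤ w i j) ∧ (∀ i j, w i j ≠ 0 → R i j) ∧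
      (∀ i, ∑ j, w i j = a i) ∧ ∀ j, ∑ i, w i j ≤ b j := by
  obtain ⟨w, hw⟩ := IsCompact.nonempty_iInter_of_sequence_nonempty_isCompact_isClosed
    (fun m : ℕ => approxTransportPlans a b R (1 / (m + 1)))
    (fun m => approxTransportPlans_mono (by gcongr; simp))
    (approxTransportPlans_nonempty ha hall)
    (isCompact_Icc.of_isClosed_subset (isClosed_approxTransportPlans _)
      (approxTransportPlans_subset_Icc _))
    (fun _ => isClosed_approxTransportPlans _)
  rw [mem_iInter] at hw
  have le_of_forall_le_add_one_div {x y : ℝ} (h : ∀ m : ℕ, x ≤ y + 1 / (m + 1)) : x ≤ y :=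
    le_of_forall_pos_le_add fun ε hε => by
      obtain ⟨m, hm⟩ := exists_nat_one_div_lt hε
      linarith [h m]
  obtain ⟨hw0, hwR, hrow, -⟩ := hw 0
  refine ⟨w, hw0, fun i j h => by_contra fun hR => h (hwR i j hR),
    fun i => le_antisymm (hrow i).2 (le_of_forall_le_add_one_div fun m => ?_),
    fun j => le_of_forall_le_add_one_div fun m => (hw m).2.2.2 j⟩
  linarith [((hw m).2.2.1 i).1]

end Hall

section Gluing

variable {X Y I J : Type*} [MeasurableSpace X] [MeasurableSpace Y] [Fintype I] [Fintype J]
  [MeasurableSpace I] [DiscreteMeasurableSpace I] (μ : Measure X) (ν : Measure Y)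
  [IsFiniteMeasure μ] [IsFiniteMeasure ν] {q : X → I} {r : Y → J} (w : I → J → ℝ)

theorem map_fst_sum_smul_prod_cond (hq : Measurable q) (hw0 : ∀ i j, 0 ≤ w i j)
    (hrow : ∀ i, ∑ j, w i j = μ.real (q ⁻¹' {i})) (hcol : ∀ j, ∑ i, w i j = ν.real (r ⁻¹' {j})) :
    (∑ i, ∑ j, ENNReal.ofReal (w i j) • (μ[|q ← i]).prod (ν[|r ← j])).map Prod.fst = μ := by
  have hterm (i : I) (j : J) :
      ENNReal.ofReal (w i j) • ((μ[|q ← i]).prod (ν[|r ← j])).map Prod.fst =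
        ENNReal.ofReal (w i j) • μ[|q ← i] := by
    rw [Measure.map_fst_prod]
    by_cases hj : ν (r ⁻¹' {j}) = 0
    · have : ∑ i, w i j = 0 := by rw [hcol, measureReal_def, hj, ENNReal.toReal_zero]
      simp [(Finset.sum_eq_zero_iff_of_nonneg fun i _ => hw0 i j).1 this i (Finset.mem_univ i)]
    · have := cond_isProbabilityMeasure hj
      simp
  conv_rhs => rw [← sum_meas_smul_cond_fiber hq μ]
  simp only [Measure.map_finset_sum' measurable_fst.aemeasurable, Measure.map_smul, hterm,
    ← Finset.sum_smul]
  congr! with i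
  rw [← ENNReal.ofReal_sum_of_nonneg fun j _ => hw0 i j, hrow, ofReal_measureReal]

variable [MeasurableSpace J] [DiscreteMeasurableSpace J]

theorem exists_coupling_of_transportPlan (hq : Measurable q) (hr : Measurable r)
    (hw0 : ∀ i j, 0 ≤ w i j) (hrow : ∀ i, ∑ j, w i j = μ.real (q ⁻¹' {i}))
    (hcol : ∀ j, ∑ i, w i j = ν.real (r ⁻¹' {j})) :
    ∃ π : Measure (X × Y), π.map Prod.fst = μ ∧ π.map Prod.snd = ν ∧
      ∀ᵐ p ∂π, w (q p.1) (r p.2) ≠ 0 := by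
  refine ⟨∑ i, ∑ j, ENNReal.ofReal (w i j) • (μ[|q ← i]).prod (ν[|r ← j]),
    map_fst_sum_smul_prod_cond μ ν w hq hw0 hrow hcol, ?_, ?_⟩
  · change Measure.snd _ = ν
    rw [← Measure.fst_map_swap, Measure.fst]
    simp only [Measure.map_finset_sum' measurable_swap.aemeasurable, Measure.map_smul,
      Measure.prod_swap]
    rw [Finset.sum_comm]
    exact map_fst_sum_smul_prod_cond ν μ (fun j i => w i j) hr (fun j i => hw0 i j) hcol hrow
  · rw [ae_iff, Measure.coe_finsetSum, Finset.sum_apply]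
    refine Finset.sum_eq_zero fun i _ => ?_
    rw [Measure.coe_finsetSum, Finset.sum_apply]
    refine Finset.sum_eq_zero fun j _ => ?_
    rw [Measure.smul_apply, smul_eq_mul, mul_eq_zero, or_iff_not_imp_left, ENNReal.ofReal_eq_zero]
    intro hw
    rw [← ae_iff]
    filter_upwards [Measure.quasiMeasurePreserving_fst.ae (ae_cond_mem (hq (.singleton i))),
      Measure.quasiMeasurePreserving_snd.ae (ae_cond_mem (hr (.singleton j)))] with p hp1 hp2
    rw [hp1, hp2]
    exact (lt_of_not_ge hw).ne'

variable {μ ν} [IsProbabilityMeasure μ] [IsProbabilityMeasure ν]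

theorem exists_coupling_ae_cell_meets {Γ : Set (X × Y)}
    (hΓ : ∀ O : Set X, MeasurableSet O → μ O ≤ ν {y | ∃ x ∈ O, (x, y) ∈ Γ})
    (hq : Measurable q) (hr : Measurable r) :
    ∃ π : Measure (X × Y), π.map Prod.fst = μ ∧ π.map Prod.snd = ν ∧
      ∀ᵐ p ∂π, ∃ p' ∈ Γ, q p'.1 = q p.1 ∧ r p'.2 = r p.2 := by
  have hμS (S : Finset I) : ∑ i ∈ S, μ.real (q ⁻¹' {i}) = μ.real (q ⁻¹' S) :=
    sum_measureReal_preimage_singleton S fun i _ => hq (.singleton i)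
  have hνT (T : Finset J) : ∑ j ∈ T, ν.real (r ⁻¹' {j}) = ν.real (r ⁻¹' T) :=
    sum_measureReal_preimage_singleton T fun j _ => hr (.singleton j)
  obtain ⟨w, hw0, hwR, hrow, hcol⟩ := exists_transportPlan (a := fun i => μ.real (q ⁻¹' {i}))
    (b := fun j => ν.real (r ⁻¹' {j})) (R := fun i j => ∃ p' ∈ Γ, q p'.1 = i ∧ r p'.2 = j)
    (fun i => measureReal_nonneg) fun S T hST => by
      rw [hμS, hνT]
      refine ENNReal.toReal_mono (measure_ne_top _ _) ((hΓ _ (hq (Finset.measurableSet S))).trans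
        (measure_mono ?_))
      rintro y ⟨x, hx, hxy⟩
      exact hST _ hx _ ⟨(x, y), hxy, rfl, rfl⟩
  -- both marginals have total mass one, so the column sums cannot fall short of `ν`
  have hcol_eq (j : J) : ∑ i, w i j = ν.real (r ⁻¹' {j}) := by
    refine (Finset.sum_eq_sum_iff_of_le fun j _ => hcol j).1 ?_ j (Finset.mem_univ j)
    rw [Finset.sum_comm]
    simp only [hrow, hμS, hνT, Finset.coe_univ, preimage_univ, probReal_univ]
  obtain ⟨π, hπ1, hπ2, hπw⟩ := exists_coupling_of_transportPlan μ ν w hq hr hw0 hrow hcol_eq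
  exact ⟨π, hπ1, hπ2, hπw.mono fun p hp => hwR _ _ hp⟩

end Gluing

open TopologicalSpace in
theorem exists_measurable_quantizer {X : Type*} [MetricSpace X] [SeparableSpace X]
    [MeasurableSpace X] [OpensMeasurableSpace X] {K : Set X} (hK : IsCompact K) {ε : ℝ}
    (hε : 0 < ε) :
    ∃ (N : ℕ) (q : X → Fin N), Measurable q ∧ ∀ x ∈ K, ∀ y, q y = q x → y ∈ K ∧ dist y x < ε := by
  classical
  rcases isEmpty_or_nonempty X with hX | hX
  · exact ⟨1, fun _ => 0, measurable_const, fun x => isEmptyElim x⟩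
  obtain ⟨c, hc⟩ := exists_dense_seq X
  have hball (x : X) : ∃ k, x ∈ ball (c k) (ε / 2) := hc.exists_dist_lt x (half_pos hε)
  obtain ⟨t, ht⟩ := hK.elim_finite_subcover (fun k => ball (c k) (ε / 2)) (fun _ => isOpen_ball)
    fun x _ => mem_iUnion.2 (hball x)
  -- `x` goes to the first `k` with `x ∈ U k`, so every cell lies in `Kᶜ` or in a ball `U (k + 1)`
  let U : ℕ → Set X
    | 0 => Kᶜ
    | k + 1 => ball (c k) (ε / 2)
  have hU (x : X) : ∃ k, x ∈ U k := by
    by_cases hx : x ∈ K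
    · obtain ⟨k, hk⟩ := hball x
      exact ⟨k + 1, hk⟩
    · exact ⟨0, hx⟩
  have hU_le (x : X) : Nat.find (hU x) ≤ t.sup id + 1 := by
    by_cases hx : x ∈ K
    · obtain ⟨k, hkt, hk⟩ := mem_iUnion₂.1 (ht hx)
      exact (Nat.find_min' _ (show x ∈ U (k + 1) from hk)).trans
        (Nat.succ_le_succ (Finset.le_sup (f := id) hkt))
    · exact (Nat.find_min' _ (show x ∈ U 0 from hx)).trans (Nat.zero_le _)
  have hmeas : Measurable fun x => Nat.find (hU x) := measurable_find hU fun k => by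
    cases k
    exacts [hK.isClosed.isOpen_compl.measurableSet, measurableSet_ball]
  refine ⟨t.sup id + 2, fun x => ⟨Nat.find (hU x), Nat.lt_succ_of_le (hU_le x)⟩,
    measurable_to_countable' fun i => ?_, fun x hx y hxy => ?_⟩
  · convert hmeas (measurableSet_singleton (i : ℕ)) using 1
    ext x
    simp [Fin.ext_iff]
  · have hfind : Nat.find (hU y) = Nat.find (hU x) := congrArg Fin.val hxy
    obtain ⟨k, hk⟩ : ∃ k, Nat.find (hU x) = k + 1 :=
      Nat.exists_eq_add_one.2 (Nat.pos_of_ne_zero fun h => (h ▸ Nat.find_spec (hU x)) hx)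
    have hy : y ∈ K := not_not.1 (Nat.find_min (hU y) (by omega : 0 < Nat.find (hU y)))
    have hyk : y ∈ U (k + 1) := hk ▸ hfind ▸ Nat.find_spec (hU y)
    have hxk : x ∈ U (k + 1) := hk ▸ Nat.find_spec (hU x)
    exact ⟨hy, by linarith [dist_triangle_right y x (c k), mem_ball.1 hyk, mem_ball.1 hxk]⟩

theorem measure_compl_eq_zero_of_forall_measure_compl_cthickening {Ω : Type*}
    [PseudoMetricSpace Ω] [MeasurableSpace Ω] [OpensMeasurableSpace Ω] {π : Measure Ω}
    [IsProbabilityMeasure π] {C : Set Ω} (hC : IsClosed C)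
    (h : ∀ η > 0, π (cthickening η C)ᶜ = 0) : π Cᶜ = 0 := by
  refine (prob_compl_eq_zero_iff hC.measurableSet).2 (tendsto_nhds_unique
    ((tendsto_measure_cthickening_of_isClosed ⟨1, one_pos, measure_ne_top _ _⟩ hC).mono_left
      (nhdsWithin_le_nhds (s := Ioi 0))) (tendsto_const_nhds.congr' ?_))
  filter_upwards [self_mem_nhdsWithin] with η hη
  exact ((prob_compl_eq_zero_iff isClosed_cthickening.measurableSet).1 (h η hη)).symm

section Polish

variable {X Y : Type*} [MetricSpace X] [CompleteSpace X] [SecondCountableTopology X]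
  [MeasurableSpace X] [BorelSpace X] [MetricSpace Y] [CompleteSpace Y] [SecondCountableTopology Y]
  [MeasurableSpace Y] [BorelSpace Y]

theorem exists_isCompact_measure_compl_le (μ : Measure X) [IsFiniteMeasure μ] {δ : ℝ≥0∞}
    (hδ : 0 < δ) : ∃ K, IsCompact K ∧ μ Kᶜ ≤ δ := by
  simpa using isTightMeasureSet_iff_exists_isCompact_measure_compl_le.1
    (isTightMeasureSet_singleton (μ := μ)) δ hδ

theorem exists_coupling_measure_compl_thickening_le {μ : Measure X} {ν : Measure Y}
    [IsProbabilityMeasure μ] [IsProbabilityMeasure ν] {Γ : Set (X × Y)}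
    (hΓ : ∀ O : Set X, MeasurableSet O → μ O ≤ ν {y | ∃ x ∈ O, (x, y) ∈ Γ}) {ε : ℝ} (hε : 0 < ε) :
    ∃ π : Measure (X × Y), π.map Prod.fst = μ ∧ π.map Prod.snd = ν ∧
      π (thickening ε Γ)ᶜ ≤ ENNReal.ofReal ε := by
  have hδ : 0 < ENNReal.ofReal ε / 2 := ENNReal.half_pos (ENNReal.ofReal_pos.2 hε).ne'
  obtain ⟨K, hK, hμK⟩ := exists_isCompact_measure_compl_le μ hδ
  obtain ⟨L, hL, hνL⟩ := exists_isCompact_measure_compl_le ν hδ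
  obtain ⟨N, q, hq, hqK⟩ := exists_measurable_quantizer hK hε
  obtain ⟨M, r, hr, hrL⟩ := exists_measurable_quantizer hL hε
  obtain ⟨π, hπ1, hπ2, hπΓ⟩ := exists_coupling_ae_cell_meets hΓ hq hr
  refine ⟨π, hπ1, hπ2, ?_⟩
  calc π (thickening ε Γ)ᶜ ≤ π (Prod.fst ⁻¹' Kᶜ ∪ Prod.snd ⁻¹' Lᶜ) := by
        refine measure_mono_ae (hπΓ.mono fun p ⟨p', hp'Γ, hq', hr'⟩ (hp : p ∉ thickening ε Γ) => ?_)
        change p ∈ Prod.fst ⁻¹' Kᶜ ∪ Prod.snd ⁻¹' Lᶜ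
        rw [mem_union, mem_preimage, mem_preimage, mem_compl_iff, mem_compl_iff, ← not_and_or]
        rintro ⟨hpK, hpL⟩
        obtain ⟨-, h1⟩ := hqK p.1 hpK p'.1 hq'
        obtain ⟨-, h2⟩ := hrL p.2 hpL p'.2 hr'
        exact hp (mem_thickening_iff.2 ⟨p', hp'Γ, by
          rw [dist_comm, Prod.dist_eq]; exact max_lt h1 h2⟩)
    _ ≤ π (Prod.fst ⁻¹' Kᶜ) + π (Prod.snd ⁻¹' Lᶜ) := measure_union_le _ _
    _ = μ Kᶜ + ν Lᶜ := by
        rw [← hπ1, ← hπ2, Measure.map_apply measurable_fst hK.isClosed.measurableSet.compl,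
          Measure.map_apply measurable_snd hL.isClosed.measurableSet.compl]
    _ ≤ ENNReal.ofReal ε := by
        simpa only [ENNReal.add_halves] using add_le_add hμK hνL

theorem isCompact_setOf_map_fst_eq_and_map_snd_eq (μ : ProbabilityMeasure X)
    (ν : ProbabilityMeasure Y) :
    IsCompact {π : ProbabilityMeasure (X × Y) |
      π.map measurable_fst.aemeasurable = μ ∧ π.map measurable_snd.aemeasurable = ν} := by
  set S := {π : ProbabilityMeasure (X × Y) |
      π.map measurable_fst.aemeasurable = μ ∧ π.map measurable_snd.aemeasurable = ν}
  have hclosed : IsClosed S :=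
    (isClosed_eq (ProbabilityMeasure.continuous_map continuous_fst) continuous_const).inter
      (isClosed_eq (ProbabilityMeasure.continuous_map continuous_snd) continuous_const)
  have htight : IsTightMeasureSet {(π : Measure (X × Y)) | π ∈ S} := by
    refine .prodMk (isTightMeasureSet_singleton (μ := (μ : Measure X)).subset ?_)
      (isTightMeasureSet_singleton (μ := (ν : Measure Y)).subset ?_)
    · rintro _ ⟨_, ⟨π, hπ, rfl⟩, rfl⟩
      exact congrArg ProbabilityMeasure.toMeasure hπ.1
    · rintro _ ⟨_, ⟨π, hπ, rfl⟩, rfl⟩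
      exact congrArg ProbabilityMeasure.toMeasure hπ.2
  simpa only [hclosed.closure_eq] using isCompact_closure_of_isTightMeasureSet htight

theorem exists_coupling_measure_compl_eq_zero {μ : Measure X} {ν : Measure Y}
    [IsProbabilityMeasure μ] [IsProbabilityMeasure ν] {C : Set (X × Y)} (hC : IsClosed C)
    (happrox : ∀ ε > 0, ∃ π : Measure (X × Y), π.map Prod.fst = μ ∧ π.map Prod.snd = ν ∧
      π (thickening ε C)ᶜ ≤ ENNReal.ofReal ε) :
    ∃ π : Measure (X × Y), IsProbabilityMeasure π ∧ π.map Prod.fst = μ ∧ π.map Prod.snd = ν ∧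
      π Cᶜ = 0 := by
  choose πs hπs1 hπs2 hπsC using fun k : ℕ => happrox (1 / (k + 1)) (by positivity)
  have hprob (k : ℕ) : IsProbabilityMeasure (πs k) :=
    ⟨by rw [← preimage_univ (f := Prod.fst), ← Measure.map_apply measurable_fst .univ, hπs1 k,
      measure_univ]⟩
  let P (k : ℕ) : ProbabilityMeasure (X × Y) := ⟨πs k, hprob k⟩
  obtain ⟨π, ⟨hπ1, hπ2⟩, φ, hφ, hlim⟩ :=
    (isCompact_setOf_map_fst_eq_and_map_snd_eq ⟨μ, inferInstance⟩ ⟨ν, inferInstance⟩).tendsto_subseq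
      (x := P) fun k => ⟨Subtype.ext (hπs1 k), Subtype.ext (hπs2 k)⟩
  refine ⟨π, inferInstance, congrArg Subtype.val hπ1, congrArg Subtype.val hπ2,
    measure_compl_eq_zero_of_forall_measure_compl_cthickening hC fun η hη => ?_⟩
  have hε : Tendsto (fun k => (1 : ℝ) / (φ k + 1)) atTop (𝓝 0) :=
    tendsto_one_div_add_atTop_nhds_zero_nat.comp hφ.tendsto_atTop
  have hsmall : Tendsto (fun k => πs (φ k) (cthickening η C)ᶜ) atTop (𝓝 0) := by
    refine tendsto_of_tendsto_of_tendsto_of_le_of_le' tendsto_const_nhds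
      (ENNReal.ofReal_zero ▸ ENNReal.tendsto_ofReal hε) (.of_forall fun _ => zero_le) ?_
    filter_upwards [hε.eventually (ge_mem_nhds hη)] with k hk
    exact (measure_mono (compl_subset_compl.2 (thickening_subset_cthickening_of_le hk C))).trans
      (hπsC (φ k))
  refine le_antisymm ?_ zero_le
  calc _ ≤ atTop.liminf fun k => (P (φ k) : Measure (X × Y)) (cthickening η C)ᶜ :=
        ProbabilityMeasure.le_liminf_measure_open_of_tendsto hlim isClosed_cthickening.isOpen_compl
    _ = 0 := hsmall.liminf_eq

end Polish

theorem stmt2_general (n : ℕ) (μ ν : Measure (E n))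
    (hμp : IsProbabilityMeasure μ) (hνp : IsProbabilityMeasure ν)
    (Γ : Set (E n × E n)) (hΓ : IsClosed Γ)
    (h1 : ∀ O : Set (E n), MeasurableSet O → μ O ≤ ν {y : E n | ∃ x ∈ O, (x, y) ∈ Γ}) :
    ∃ π : Measure (E n × E n), IsProbabilityMeasure π ∧
      π.map Prod.fst = μ ∧ π.map Prod.snd = ν ∧ π Γᶜ = 0 :=
  exists_coupling_measure_compl_eq_zero hΓ fun _ hε =>
    exists_coupling_measure_compl_thickening_le h1 hε

/-- if Γ is closed and μ, ν are probability measures such that for every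
Borel O one has μ(O) ≤ ν(Γ-image of O) and ν(O) ≤ μ(Γ-preimage of O), then there is a
coupling of μ and ν concentrated on Γ. -/
theorem stmt2 (n : ℕ) (μ ν : Measure (E n))
    (hμp : IsProbabilityMeasure μ) (hνp : IsProbabilityMeasure ν)
    (Γ : Set (E n × E n)) (hΓ : IsClosed Γ)
    (h1 : ∀ O : Set (E n), MeasurableSet O → μ O ≤ ν {y : E n | ∃ x ∈ O, (x, y) ∈ Γ})
    (h2 : ∀ O : Set (E n), MeasurableSet O → ν O ≤ μ {x : E n | ∃ y ∈ O, (x, y) ∈ Γ}) :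
    ∃ π : Measure (E n × E n), IsProbabilityMeasure π ∧
      π.map Prod.fst = μ ∧ π.map Prod.snd = ν ∧ π Γᶜ = 0 :=
  stmt2_general n μ ν hμp hνp Γ hΓ h1
end
end

section
/- Let μ = Σ_{i=1}^{M₁} mᵢ δ_{xᵢ} and ν = Σ_{j=1}^{M₂} nⱼ δ_{yⱼ} be Borel probability measures on ℝⁿ, where mᵢ > 0, nⱼ > 0, the points x₁,…,x_{M₁} are pairwise distinct and the points y₁,…,y_{M₂} are pairwise distinct. Let Γ ⊂ ℝⁿ × ℝⁿ be a closed set such that for every Borel set O ⊂ ℝⁿ one has μ(O) ≤ ν({y : ∃ x ∈ O, (x,y) ∈ Γ}) and ν(O) ≤ μ({x : ∃ y ∈ O, (x,y) ∈ Γ}). Then there exists a Borel probability measure π on ℝⁿ × ℝⁿ with first marginal μ and second marginal ν which is concentrated on Γ, i.e. π((ℝⁿ × ℝⁿ) ∖ Γ) = 0. -/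
/-!
On the atoms, the condition on `Γ` is the weighted Hall condition for the relation
`R i j ↔ (x i, y j) ∈ Γ`, and a coupling concentrated on `Γ` is a nonnegative matrix supported on
`R` with row sums `m` and column sums `w`. Such a matrix is found as a maximal flow: among the
partial plans respecting all capacities, a compact set, take one of maximal mass. Augmenting
along residual paths shows that every column reachable from a row with unused supply is
saturated, so if a row had unused supply, the reachable rows would violate Hall's condition.
-/

open MeasureTheory Set Metric Filter
open scoped RealInnerProductSpace ENNReal

noncomputable section

open Finset

section TransportPlan

variable {α β : Type*}

lemma pi_single_pi_single_apply [DecidableEq α] [DecidableEq β] (i i' : α) (j j' : β) (δ : ℝ) :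
    (Pi.single i (Pi.single j δ) : α → β → ℝ) i' j' = if i' = i ∧ j' = j then δ else 0 := by
  by_cases hi : i' = i <;> by_cases hj : j' = j <;> simp [hi, hj]

lemma sum_pi_single_row [Fintype β] [DecidableEq α] [DecidableEq β] (i i' : α) (j : β) (δ : ℝ) :
    ∑ j', (Pi.single i (Pi.single j δ) : α → β → ℝ) i' j' = if i' = i then δ else 0 := by
  rw [Pi.single_apply]; split_ifs <;> simp

lemma sum_pi_single_col [Fintype α] [DecidableEq α] [DecidableEq β] (i : α) (j j' : β) (δ : ℝ) :
    ∑ i', (Pi.single i (Pi.single j δ) : α → β → ℝ) i' j' = if j' = j then δ else 0 := by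
  simp [Pi.single_apply, apply_ite (fun f : β → ℝ => f j')]

lemma pi_single_pi_single_apply_nonneg [DecidableEq α] [DecidableEq β] (i i' : α) (j j' : β)
    {δ : ℝ} (hδ : 0 ≤ δ) : 0 ≤ (Pi.single i (Pi.single j δ) : α → β → ℝ) i' j' := by
  rw [pi_single_pi_single_apply]; split_ifs <;> simp [hδ]

structure IsPartialPlan [Fintype β] (R : α → β → Prop) (m : α → ℝ) (p : α → β → ℝ) : Prop where
  nonneg : ∀ i j, 0 ≤ p i j
  eq_zero_of_not_rel : ∀ i j, ¬ R i j → p i j = 0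
  sum_le : ∀ i, ∑ j, p i j ≤ m i

namespace IsPartialPlan

variable [Fintype β] [DecidableEq α] [DecidableEq β] {R : α → β → Prop} {m : α → ℝ}
  {p : α → β → ℝ} {i : α} {j : β} {δ : ℝ}

lemma add_single (hp : IsPartialPlan R m p) (hR : R i j) (hδ : 0 ≤ δ)
    (hi : ∑ j, p i j + δ ≤ m i) : IsPartialPlan R m (p + Pi.single i (Pi.single j δ)) where
  nonneg i' j' := add_nonneg (hp.nonneg i' j') (pi_single_pi_single_apply_nonneg _ _ _ _ hδ)
  eq_zero_of_not_rel i' j' h := by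
    have : ¬ (i' = i ∧ j' = j) := by rintro ⟨rfl, rfl⟩; exact h hR
    simp [pi_single_pi_single_apply, this, hp.eq_zero_of_not_rel i' j' h]
  sum_le i' := by
    simp only [Pi.add_apply, sum_add_distrib, sum_pi_single_row]
    split_ifs with h
    · exact h ▸ hi
    · simpa using hp.sum_le i'

lemma sub_single (hp : IsPartialPlan R m p) (hδ : 0 ≤ δ) (hδp : δ ≤ p i j) :
    IsPartialPlan R m (p - Pi.single i (Pi.single j δ)) where
  nonneg i' j' := by
    rw [Pi.sub_apply, Pi.sub_apply, pi_single_pi_single_apply]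
    split_ifs with h
    · obtain ⟨rfl, rfl⟩ := h; linarith
    · simpa using hp.nonneg i' j'
  eq_zero_of_not_rel i' j' h := by
    have hij := hp.eq_zero_of_not_rel i' j' h
    rw [Pi.sub_apply, Pi.sub_apply, pi_single_pi_single_apply]
    split_ifs with h'
    · obtain ⟨rfl, rfl⟩ := h'; linarith
    · simpa using hij
  sum_le i' := by
    simp only [Pi.sub_apply, sum_sub_distrib, sum_pi_single_row]
    have := hp.sum_le i'
    split_ifs <;> linarith

end IsPartialPlan

inductive ResidualReachable [Fintype β] (R : α → β → Prop) (m : α → ℝ) (p : α → β → ℝ) :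
    α ⊕ β → Prop
  | of_sum_lt {i : α} : ∑ j, p i j < m i → ResidualReachable R m p (.inl i)
  | forward {i : α} {j : β} : ResidualReachable R m p (.inl i) → R i j →
      ResidualReachable R m p (.inr j)
  | backward {i : α} {j : β} : ResidualReachable R m p (.inr j) → 0 < p i j →
      ResidualReachable R m p (.inl i)

variable [Fintype α] [Fintype β] {R : α → β → Prop} {m : α → ℝ} {p : α → β → ℝ}

open Classical in
/-- `q` is `p` augmented along a residual path ending at `v`. The amount `δ` and the change of
each entry stay below `ε`, so that a backward edge, which loses `δ`, stays nonnegative. -/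
theorem ResidualReachable.exists_augment (hp : IsPartialPlan R m p) {v : α ⊕ β}
    (hv : ResidualReachable R m p v) {ε : ℝ} (hε : 0 < ε) :
    ∃ δ q, 0 < δ ∧ δ ≤ ε ∧ IsPartialPlan R m q ∧ (∀ i j, p i j - ε ≤ q i j) ∧
      (∀ j, ∑ i, q i j = ∑ i, p i j + if v = .inr j then δ else 0) ∧
      (∀ i, v = .inl i → ∑ j, q i j + δ ≤ m i) := by
  induction hv generalizing ε with
  | @of_sum_lt i hi =>
    refine ⟨min ε (m i - ∑ j, p i j), p, lt_min hε (by linarith), min_le_left _ _, hp,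
      fun _ _ => by linarith, fun j => by simp, ?_⟩
    rintro i' ⟨⟩
    linarith [min_le_right ε (m i - ∑ j, p i j)]
  | @forward i j _ hR ih =>
    obtain ⟨δ, q, hδ, hδε, hq, hqp, hcol, hrow⟩ := ih hε
    refine ⟨δ, q + Pi.single i (Pi.single j δ), hδ, hδε, hq.add_single hR hδ.le (hrow i rfl),
      fun i' j' => ?_, fun j' => ?_, by rintro i' ⟨⟩⟩
    · simp only [Pi.add_apply]
      linarith [hqp i' j', pi_single_pi_single_apply_nonneg i i' j j' hδ.le]
    · simp only [Pi.add_apply, sum_add_distrib, sum_pi_single_col, hcol]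
      simp [eq_comm]
  | @backward i j _ hpos ih =>
    obtain ⟨δ, q, hδ, hδε, hq, hqp, hcol, hrow⟩ := ih (lt_min (half_pos hε) (half_pos hpos))
    have hε₁ := min_le_left (ε / 2) (p i j / 2)
    have hε₂ := min_le_right (ε / 2) (p i j / 2)
    have hδq : δ ≤ q i j := by linarith [hqp i j]
    refine ⟨δ, q - Pi.single i (Pi.single j δ), hδ, by linarith, hq.sub_single hδ.le hδq,
      fun i' j' => ?_, fun j' => ?_, ?_⟩
    · rw [Pi.sub_apply, Pi.sub_apply, pi_single_pi_single_apply]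
      split_ifs with h
      · obtain ⟨rfl, rfl⟩ := h; linarith [hqp i' j']
      · linarith [hqp i' j']
    · simp only [Pi.sub_apply, sum_sub_distrib, sum_pi_single_col, hcol]
      split_ifs <;> simp_all
    · rintro i' ⟨⟩
      simp only [Pi.sub_apply, sum_sub_distrib, sum_pi_single_row, if_true]
      linarith [hq.sum_le i]

def cappedPlans (R : α → β → Prop) (m : α → ℝ) (w : β → ℝ) : Set (α → β → ℝ) :=
  {p | IsPartialPlan R m p ∧ ∀ j, ∑ i, p i j ≤ w j}

variable {w : β → ℝ}

lemma zero_mem_cappedPlans (hm : ∀ i, 0 ≤ m i) (hw : ∀ j, 0 ≤ w j) :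
    0 ∈ cappedPlans R m w :=
  ⟨⟨fun _ _ => le_rfl, fun _ _ _ => rfl, by simpa using hm⟩, by simpa using hw⟩

lemma isCompact_cappedPlans : IsCompact (cappedPlans R m w) := by
  have hclosed : IsClosed (cappedPlans R m w) := by
    have : cappedPlans R m w = {p | ∀ i j, 0 ≤ p i j} ∩ {p | ∀ i j, ¬ R i j → p i j = 0} ∩
        {p | ∀ i, ∑ j, p i j ≤ m i} ∩ {p | ∀ j, ∑ i, p i j ≤ w j} := by
      ext p
      exact ⟨fun ⟨⟨h₀, h₁, h₂⟩, h₃⟩ => ⟨⟨⟨h₀, h₁⟩, h₂⟩, h₃⟩,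
        fun ⟨⟨⟨h₀, h₁⟩, h₂⟩, h₃⟩ => ⟨⟨h₀, h₁, h₂⟩, h₃⟩⟩
    rw [this]
    simp only [Set.ofPred_forall]
    refine .inter (.inter (.inter ?_ ?_) ?_) ?_ <;>
      refine isClosed_iInter fun _ => ?_
    · exact isClosed_iInter fun _ => isClosed_le continuous_const (by fun_prop)
    · exact isClosed_iInter fun _ => isClosed_iInter fun _ => isClosed_eq (by fun_prop)
        continuous_const
    · exact isClosed_le (by fun_prop) continuous_const
    · exact isClosed_le (by fun_prop) continuous_const
  refine (isCompact_univ_pi fun i => isCompact_univ_pi fun _ => isCompact_Icc (a := 0)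
    (b := m i)).of_isClosed_subset hclosed fun p hp i _ j _ => ⟨hp.1.nonneg i j, ?_⟩
  exact (single_le_sum (fun j _ => hp.1.nonneg i j) (mem_univ j)).trans (hp.1.sum_le i)

lemma ResidualReachable.sum_eq_of_isMaxOn (hp : p ∈ cappedPlans R m w)
    (hmax : IsMaxOn (fun q => ∑ j, ∑ i, q i j) (cappedPlans R m w) p) {j : β}
    (hj : ResidualReachable R m p (.inr j)) : ∑ i, p i j = w j := by
  classical
  by_contra hne
  have hlt := (hp.2 j).lt_of_ne hne
  obtain ⟨δ, q, hδ, hδε, hq, -, hcol, -⟩ := hj.exists_augment hp.1 (sub_pos.2 hlt)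
  have hqK : q ∈ cappedPlans R m w := by
    refine ⟨hq, fun j' => ?_⟩
    rw [hcol]
    split_ifs with h
    · cases Sum.inr_injective h; linarith
    · simpa using hp.2 j'
  have hmass : ∑ j, ∑ i, q i j = ∑ j, ∑ i, p i j + δ := by
    simp [hcol, sum_add_distrib]
  linarith [show ∑ j, ∑ i, q i j ≤ ∑ j, ∑ i, p i j from hmax hqK]

open Classical in
lemma exists_sum_filter_lt_of_sum_lt (hp : IsPartialPlan R m p)
    (hsat : ∀ j, ResidualReachable R m p (.inr j) → ∑ i, p i j = w j) {i₀ : α}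
    (hi₀ : ∑ j, p i₀ j < m i₀) :
    ∃ S : Finset α, ∑ j with ∃ i ∈ S, R i j, w j < ∑ i ∈ S, m i := by
  set S := univ.filter fun i => ResidualReachable R m p (.inl i)
  have hcol : ∀ j, ResidualReachable R m p (.inr j) → ∑ i, p i j = ∑ i ∈ S, p i j := by
    refine fun j hj => (sum_subset (subset_univ S) fun i _ hi => ?_).symm
    by_contra hne
    exact hi (mem_filter.2 ⟨mem_univ i, hj.backward ((hp.nonneg i j).lt_of_ne' hne)⟩)
  have hN : ∀ j ∈ univ.filter fun j => ∃ i ∈ S, R i j, ResidualReachable R m p (.inr j) := by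
    intro j hj
    obtain ⟨i, hi, hR⟩ := (mem_filter.1 hj).2
    exact (mem_filter.1 hi).2.forward hR
  refine ⟨S, ?_⟩
  calc ∑ j with ∃ i ∈ S, R i j, w j = ∑ j with ∃ i ∈ S, R i j, ∑ i ∈ S, p i j :=
        sum_congr rfl fun j hj => by rw [← hsat j (hN j hj), hcol j (hN j hj)]
    _ ≤ ∑ i ∈ S, ∑ j, p i j := by
        rw [sum_comm]
        exact sum_le_sum fun i _ => sum_le_sum_of_subset_of_nonneg (subset_univ _)
          fun j _ _ => hp.nonneg i j
    _ < ∑ i ∈ S, m i :=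
        sum_lt_sum (fun i _ => hp.sum_le i) ⟨i₀, mem_filter.2 ⟨mem_univ i₀, .of_sum_lt hi₀⟩, hi₀⟩

open Classical in
theorem exists_plan_of_hall (hm : ∀ i, 0 ≤ m i) (hw : ∀ j, 0 ≤ w j)
    (hsum : ∑ i, m i = ∑ j, w j)
    (hall : ∀ S : Finset α, ∑ i ∈ S, m i ≤ ∑ j with ∃ i ∈ S, R i j, w j) :
    ∃ p : α → β → ℝ, (∀ i j, 0 ≤ p i j) ∧ (∀ i j, ¬ R i j → p i j = 0) ∧
      (∀ i, ∑ j, p i j = m i) ∧ ∀ j, ∑ i, p i j = w j := by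
  obtain ⟨p, hpK, hmax⟩ := (isCompact_cappedPlans (R := R)).exists_isMaxOn
    ⟨0, zero_mem_cappedPlans hm hw⟩ (f := fun q => ∑ j, ∑ i, q i j) (by fun_prop)
  have hrow : ∀ i, ∑ j, p i j = m i := by
    refine fun i => (hpK.1.sum_le i).antisymm (not_lt.1 fun hi => ?_)
    obtain ⟨S, hS⟩ :=
      exists_sum_filter_lt_of_sum_lt hpK.1 (fun _ hj => hj.sum_eq_of_isMaxOn hpK hmax) hi
    exact (hall S).not_gt hS
  have htotal : ∑ j, ∑ i, p i j = ∑ j, w j := by rw [sum_comm]; simp [hrow, hsum]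
  exact ⟨p, hpK.1.nonneg, hpK.1.eq_zero_of_not_rel, hrow,
    fun j => (sum_eq_sum_iff_of_le fun j _ => hpK.2 j).1 htotal j (mem_univ j)⟩

end TransportPlan

section DiracSums

variable {ι κ X Y : Type*} [MeasurableSpace X] [MeasurableSpace Y]

lemma MeasureTheory.Measure.map_finsetSum {f : X → Y} (hf : Measurable f) (s : Finset ι)
    (μ : ι → Measure X) : (∑ i ∈ s, μ i).map f = ∑ i ∈ s, (μ i).map f := by
  simp only [← Measure.mapₗ_apply_of_measurable hf, _root_.map_sum]

open Classical in
lemma MeasureTheory.Measure.finsetSum_smul_dirac_apply [MeasurableSingletonClass X]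
    (s : Finset ι) (a : ι → ℝ≥0∞) (z : ι → X) (A : Set X) :
    (∑ i ∈ s, a i • Measure.dirac (z i)) A = ∑ i ∈ s with z i ∈ A, a i := by
  simp [Measure.finsetSum_apply, Measure.dirac_apply, Set.indicator_apply, sum_filter]

open Classical in
lemma sum_ofReal_smul_dirac_apply [Fintype ι] [MeasurableSingletonClass X] {m : ι → ℝ}
    (hm : ∀ i, 0 ≤ m i) (x : ι → X) (A : Set X) :
    (∑ i, ENNReal.ofReal (m i) • Measure.dirac (x i)) A =
      ENNReal.ofReal (∑ i with x i ∈ A, m i) := by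
  rw [Measure.finsetSum_smul_dirac_apply, ENNReal.ofReal_sum_of_nonneg fun i _ => hm i]

lemma sum_ofReal_smul_dirac_apply_univ [Fintype ι] [MeasurableSingletonClass X] {m : ι → ℝ}
    (hm : ∀ i, 0 ≤ m i) (x : ι → X) :
    (∑ i, ENNReal.ofReal (m i) • Measure.dirac (x i)) Set.univ = ENNReal.ofReal (∑ i, m i) := by
  classical
  simp [sum_ofReal_smul_dirac_apply hm]

variable [Fintype ι] [Fintype κ]

lemma map_fst_sum_sum_ofReal_smul_dirac {p : ι → κ → ℝ} (hp : ∀ i j, 0 ≤ p i j) (x : ι → X)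
    (y : κ → Y) :
    (∑ i, ∑ j, ENNReal.ofReal (p i j) • Measure.dirac (x i, y j)).map Prod.fst =
      ∑ i, ENNReal.ofReal (∑ j, p i j) • Measure.dirac (x i) := by
  simp only [Measure.map_finsetSum measurable_fst, Measure.map_smul,
    Measure.map_dirac' measurable_fst, ← Finset.sum_smul,
    ENNReal.ofReal_sum_of_nonneg fun j _ => hp _ j]

lemma map_snd_sum_sum_ofReal_smul_dirac {p : ι → κ → ℝ} (hp : ∀ i j, 0 ≤ p i j) (x : ι → X)
    (y : κ → Y) :
    (∑ i, ∑ j, ENNReal.ofReal (p i j) • Measure.dirac (x i, y j)).map Prod.snd =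
      ∑ j, ENNReal.ofReal (∑ i, p i j) • Measure.dirac (y j) := by
  simp only [Measure.map_finsetSum measurable_snd, Measure.map_smul,
    Measure.map_dirac' measurable_snd]
  rw [Finset.sum_comm]
  simp only [← Finset.sum_smul, ENNReal.ofReal_sum_of_nonneg fun i _ => hp i _]

lemma sum_sum_ofReal_smul_dirac_apply_eq_zero [MeasurableSingletonClass X]
    [MeasurableSingletonClass Y] {p : ι → κ → ℝ} (x : ι → X) (y : κ → Y) {A : Set (X × Y)}
    (hA : ∀ i j, (x i, y j) ∈ A → p i j = 0) :
    (∑ i, ∑ j, ENNReal.ofReal (p i j) • Measure.dirac (x i, y j)) A = 0 := by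
  simp only [Measure.finsetSum_apply]
  refine sum_eq_zero fun i _ => sum_eq_zero fun j _ => ?_
  by_cases h : (x i, y j) ∈ A <;> simp [h, hA i j]

open Classical in
theorem sum_le_sum_filter_of_le_measure_image [MeasurableSingletonClass X]
    [MeasurableSingletonClass Y] {m : ι → ℝ} {w : κ → ℝ} (hm : ∀ i, 0 ≤ m i) (hw : ∀ j, 0 ≤ w j)
    (x : ι → X) (y : κ → Y) (Γ : Set (X × Y))
    (h : ∀ O : Set X, MeasurableSet O → (∑ i, ENNReal.ofReal (m i) • Measure.dirac (x i)) O ≤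
      (∑ j, ENNReal.ofReal (w j) • Measure.dirac (y j)) {b | ∃ a ∈ O, (a, b) ∈ Γ})
    (S : Finset ι) :
    ∑ i ∈ S, m i ≤ ∑ j with ∃ i ∈ S, (x i, y j) ∈ Γ, w j := by
  have hO := h (x '' S) (S.finite_toSet.image x).measurableSet
  rw [sum_ofReal_smul_dirac_apply hm, sum_ofReal_smul_dirac_apply hw,
    ENNReal.ofReal_le_ofReal_iff (sum_nonneg fun j _ => hw j)] at hO
  calc ∑ i ∈ S, m i ≤ ∑ i with x i ∈ x '' S, m i :=
        sum_le_sum_of_subset_of_nonneg (fun i hi => by simpa using ⟨i, hi, rfl⟩)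
          fun i _ _ => hm i
    _ ≤ _ := hO
    _ = _ := by congr 1; ext j; simp

end DiracSums

theorem stmt4_general (n M₁ M₂ : ℕ) (m : Fin M₁ → ℝ) (x : Fin M₁ → E n)
    (w : Fin M₂ → ℝ) (y : Fin M₂ → E n)
    (hm : ∀ i, 0 < m i) (hw : ∀ j, 0 < w j)
    (μ ν : Measure (E n))
    (hμ : μ = ∑ i, ENNReal.ofReal (m i) • Measure.dirac (x i))
    (hν : ν = ∑ j, ENNReal.ofReal (w j) • Measure.dirac (y j))
    (hμp : IsProbabilityMeasure μ) (hνp : IsProbabilityMeasure ν)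
    (Γ : Set (E n × E n))
    (h1 : ∀ O : Set (E n), MeasurableSet O → μ O ≤ ν {b : E n | ∃ a ∈ O, (a, b) ∈ Γ}) :
    ∃ π : Measure (E n × E n), IsProbabilityMeasure π ∧
      π.map Prod.fst = μ ∧ π.map Prod.snd = ν ∧ π Γᶜ = 0 := by
  have hm₀ : ∀ i, 0 ≤ m i := fun i => (hm i).le
  have hw₀ : ∀ j, 0 ≤ w j := fun j => (hw j).le
  subst hμ hν
  have hsum : ∑ i, m i = ∑ j, w j := by
    have h := hμp.measure_univ.trans hνp.measure_univ.symm
    rwa [sum_ofReal_smul_dirac_apply_univ hm₀, sum_ofReal_smul_dirac_apply_univ hw₀,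
      ENNReal.ofReal_eq_ofReal_iff (sum_nonneg fun i _ => hm₀ i)
        (sum_nonneg fun j _ => hw₀ j)] at h
  obtain ⟨p, hp₀, hpΓ, hrow, hcol⟩ := exists_plan_of_hall (R := fun i j => (x i, y j) ∈ Γ)
    hm₀ hw₀ hsum (sum_le_sum_filter_of_le_measure_image hm₀ hw₀ x y Γ h1)
  set π := ∑ i, ∑ j, ENNReal.ofReal (p i j) • Measure.dirac (x i, y j)
  have hfst : π.map Prod.fst = ∑ i, ENNReal.ofReal (m i) • Measure.dirac (x i) := by
    simp only [π, map_fst_sum_sum_ofReal_smul_dirac hp₀, hrow]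
  have hsnd : π.map Prod.snd = ∑ j, ENNReal.ofReal (w j) • Measure.dirac (y j) := by
    simp only [π, map_snd_sum_sum_ofReal_smul_dirac hp₀, hcol]
  have : IsProbabilityMeasure (π.map Prod.fst) := hfst ▸ hμp
  exact ⟨π, Measure.isProbabilityMeasure_of_map Prod.fst, hfst, hsnd,
    sum_sum_ofReal_smul_dirac_apply_eq_zero x y hpΓ⟩

/-- the coupling existence theorem (statement 2) in the special case where
μ and ν are finite sums of weighted Dirac masses. -/
theorem stmt4 (n M₁ M₂ : ℕ) (m : Fin M₁ → ℝ) (x : Fin M₁ → E n)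
    (w : Fin M₂ → ℝ) (y : Fin M₂ → E n)
    (hm : ∀ i, 0 < m i) (hw : ∀ j, 0 < w j)
    (hx : Function.Injective x) (hy : Function.Injective y)
    (μ ν : Measure (E n))
    (hμ : μ = ∑ i, ENNReal.ofReal (m i) • Measure.dirac (x i))
    (hν : ν = ∑ j, ENNReal.ofReal (w j) • Measure.dirac (y j))
    (hμp : IsProbabilityMeasure μ) (hνp : IsProbabilityMeasure ν)
    (Γ : Set (E n × E n)) (hΓ : IsClosed Γ)
    (h1 : ∀ O : Set (E n), MeasurableSet O → μ O ≤ ν {b : E n | ∃ a ∈ O, (a, b) ∈ Γ})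
    (h2 : ∀ O : Set (E n), MeasurableSet O → ν O ≤ μ {a : E n | ∃ b ∈ O, (a, b) ∈ Γ}) :
    ∃ π : Measure (E n × E n), IsProbabilityMeasure π ∧
      π.map Prod.fst = μ ∧ π.map Prod.snd = ν ∧ π Γᶜ = 0 :=
  stmt4_general n M₁ M₂ m x w y hm hw μ ν hμ hν hμp hνp Γ h1
end
end

section
/- Let ψ : ℝⁿ → ℝ be convex and let x, x' ∈ ℝⁿ with x ≠ x'. Set ℓ := |x − x'| and ε := −min_{t∈[0,1]} ( ψ((1−t)x + tx') − (1−t)ψ(x) − tψ(x') ) ≥ 0. Then for every z ∈ ∂ψ(x) and every z' ∈ ∂ψ(x'), one has |z − z'| ≥ 2ε/ℓ. -/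
/-! A subgradient `z` at `x` bounds the chord gap `ψ((1-t)x + tx') - ((1-t)ψ(x) + tψ(x'))` from
below by `-t A`, and a subgradient `z'` at `x'` bounds it by `-(1-t) B`, where `A, B ≥ 0` are the
errors of the two supporting hyperplanes at the opposite endpoints. Averaging the two bounds, the
gap is at least `-(A + B)/2` on the whole segment, and `A + B = ⟪z - z', x - x'⟫ ≤ ‖z - z'‖ ℓ`. -/

open MeasureTheory Set Metric Filter
open scoped RealInnerProductSpace ENNReal

noncomputable section

section ChordGap

variable {F : Type*} [NormedAddCommGroup F] [InnerProductSpace ℝ F]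
  {ψ : F → ℝ} {x x' z z' : F}

def chordGap (ψ : F → ℝ) (x x' : F) (t : ℝ) : ℝ :=
  ψ ((1 - t) • x + t • x') - ((1 - t) * ψ x + t * ψ x')

lemma chordGap_swap (ψ : F → ℝ) (x x' : F) (t : ℝ) :
    chordGap ψ x' x (1 - t) = chordGap ψ x x' t := by
  unfold chordGap
  rw [sub_sub_cancel, add_comm (t • x')]
  ring

lemma neg_mul_le_chordGap (hz : ∀ y, ψ x + ⟪z, y - x⟫ ≤ ψ y) (t : ℝ) :
    -(t * (ψ x' - ψ x - ⟪z, x' - x⟫)) ≤ chordGap ψ x x' t := by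
  have hp := hz ((1 - t) • x + t • x')
  rw [show (1 - t) • x + t • x' - x = t • (x' - x) by module, real_inner_smul_right] at hp
  unfold chordGap
  linarith

lemma neg_inner_div_two_le_chordGap (hz : ∀ y, ψ x + ⟪z, y - x⟫ ≤ ψ y)
    (hz' : ∀ y, ψ x' + ⟪z', y - x'⟫ ≤ ψ y) {t : ℝ} (ht : t ∈ Icc 0 1) :
    -(⟪z - z', x - x'⟫ / 2) ≤ chordGap ψ x x' t := by
  obtain ⟨ht0, ht1⟩ := ht
  have hA := hz x'
  have hB := hz' x
  have hgapA := neg_mul_le_chordGap (x' := x') hz t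
  have hgapB := chordGap_swap ψ x x' t ▸ neg_mul_le_chordGap (x' := x) hz' (1 - t)
  have hinner : ⟪z - z', x - x'⟫ = -⟪z, x' - x⟫ - ⟪z', x - x'⟫ := by
    rw [inner_sub_left, ← inner_neg_right, neg_sub]
  nlinarith

lemma neg_inner_div_two_le_sInf_chordGap (hz : ∀ y, ψ x + ⟪z, y - x⟫ ≤ ψ y)
    (hz' : ∀ y, ψ x' + ⟪z', y - x'⟫ ≤ ψ y) :
    -(⟪z - z', x - x'⟫ / 2) ≤ sInf (chordGap ψ x x' '' Icc 0 1) :=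
  le_csInf ((nonempty_Icc.mpr zero_le_one).image _) <| by
    rintro _ ⟨t, ht, rfl⟩
    exact neg_inner_div_two_le_chordGap hz hz' ht

end ChordGap

theorem stmt19_general (n : ℕ) (ψ : E n → ℝ)
    (x x' : E n)
    (ℓ : ℝ) (hℓ : ℓ = ‖x - x'‖)
    (ε : ℝ) (hε : ε = - sInf ((fun t : ℝ =>
      ψ ((1 - t) • x + t • x') - ((1 - t) * ψ x + t * ψ x')) '' Icc 0 1)) :
    ∀ z ∈ subdiff ψ x, ∀ z' ∈ subdiff ψ x', 2 * ε / ℓ ≤ ‖z - z'‖ := by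
  intro z hz z' hz'
  have hε_le : 2 * ε ≤ ⟪z - z', x - x'⟫ := by
    have := neg_inner_div_two_le_sInf_chordGap hz hz'
    rw [hε]
    unfold chordGap at this
    linarith
  refine div_le_of_le_mul₀ (hℓ ▸ norm_nonneg _) (norm_nonneg _) ?_
  exact hℓ ▸ hε_le.trans (real_inner_le_norm _ _)

/-- subgradients at the two endpoints of a segment on which ψ dips by ε
below the chord must be at distance at least `2ε/ℓ`. -/
theorem stmt19 (n : ℕ) (ψ : E n → ℝ) (hψ : ConvexOn ℝ Set.univ ψ)
    (x x' : E n) (hne : x ≠ x')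
    (ℓ : ℝ) (hℓ : ℓ = ‖x - x'‖)
    (ε : ℝ) (hε : ε = - sInf ((fun t : ℝ =>
      ψ ((1 - t) • x + t • x') - ((1 - t) * ψ x + t * ψ x')) '' Icc 0 1)) :
    ∀ z ∈ subdiff ψ x, ∀ z' ∈ subdiff ψ x', 2 * ε / ℓ ≤ ‖z - z'‖ :=
  stmt19_general n ψ x x' ℓ hℓ ε hε
end
end
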